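/- arXiv:2206.14351 — 2 statements merged into one kernel-verified Lean document; each statement's English description precedes it below -/
import Mathlib

section
/- Let m, n ≥ 1 and let (π_{i,j}), for 0 ≤ i ≤ m and 0 ≤ j ≤ n, be permutations with π_{0,0} = id, together with positive integers k₁ ≤ k₂ ≤ ⋯ ≤ k_m and l₁ ≥ l₂ ≥ ⋯ ≥ l_n satisfying l₁ ≤ k₁, such that π_{i−1,j} ⋖_{k_i} π_{i,j} for all 1 ≤ i ≤ m and 0 ≤ j ≤ n, and π_{i,j−1} ⋖_{l_j} π_{i,j} for all 0 ≤ i ≤ m and 1 ≤ j ≤ n. Then for every 1 ≤ j ≤ n and every 0 ≤ i ≤ m with π_{i,j−1} ≠ id, we have l_j ≤ d₁(π_{i,j−1}); and for every 1 ≤ i ≤ m and every 0 ≤ j ≤ n with π_{i−1,j} ≠ id, we have k_i ≥ d₂(π_{i−1,j}). -/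
/-- A permutation of the positive integers, modeled as a permutation of `ℕ`
fixing `0` (and, separately assumed, all but finitely many points). -/
def FinPerm (w : Equiv.Perm ℕ) : Prop :=
  w 0 = 0 ∧ {i : ℕ | w i ≠ i}.Finite

/-- The length `ℓ(w)`: the number of inversions, i.e. pairs `i < j` with `w i > w j`. -/
noncomputable def len (w : Equiv.Perm ℕ) : ℕ :=
  {p : ℕ × ℕ | p.1 < p.2 ∧ w p.2 < w p.1}.ncard

/-- The set of descents: positions `i ≥ 1` with `w i > w (i+1)`. -/
def descents (w : Equiv.Perm ℕ) : Set ℕ :=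
  {i : ℕ | 0 < i ∧ w (i + 1) < w i}

/-- `d₁(w)`: the first (smallest) descent of `w`. -/
noncomputable def d1 (w : Equiv.Perm ℕ) : ℕ := sInf (descents w)

/-- `d₂(w)`: the last (largest) descent of `w`. -/
noncomputable def d2 (w : Equiv.Perm ℕ) : ℕ := sSup (descents w)

/-- `kCover k ρ π` means `ρ ⋖_k π`:  `π = ρ t_{a b}` for some positive
`a ≤ k < b`, with `ℓ(π) = ℓ(ρ) + 1`. -/
def kCover (k : ℕ) (ρ π : Equiv.Perm ℕ) : Prop :=
  ∃ a b : ℕ, 0 < a ∧ a ≤ k ∧ k < b ∧ π = ρ * Equiv.swap a b ∧ len π = len ρ + 1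

/-!
If `ρ ⋖ ρ t_{ab}` is a Bruhat cover with `a < b`, then `ρ a < ρ b` and no `c` strictly between
`a` and `b` has `ρ c` strictly between `ρ a` and `ρ b`: otherwise `t_{ab}` would not add exactly one
inversion (a value in between contributes two lost inversions). Under this gap condition the only
descent of `ρ t_{ab}` which is not a descent of `ρ` can be at `a`, and only when `b = a + 1`; for a
`k`-cover (`a ≤ k < b`) this forces the new descent to be `k`. Starting from `π₀₀ = id`, every
descent of `π_{ij}` is therefore some `k_{i'}` with `i' ≤ i` or some `l_{j'}` with `j' ≤ j`, and the
monotonicity of the `k`'s and `l`'s together with `l₁ ≤ k₁` gives both bounds.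
-/

open Equiv Set

def inversions (w : Perm ℕ) : Set (ℕ × ℕ) :=
  {p | p.1 < p.2 ∧ w p.2 < w p.1}

lemma inversions_finite {w : Perm ℕ} (h : {i | w i ≠ i}.Finite) : (inversions w).Finite := by
  obtain ⟨N, hN⟩ := h.bddAbove
  have hfix : ∀ x, N < x → w x = x := fun x hx => by_contra fun hne => by
    have := hN hne; omega
  refine ((finite_Iic N).prod (finite_Iic N)).subset ?_
  rintro ⟨i, j⟩ ⟨hij, hinv⟩
  dsimp only at hij hinv
  suffices j ≤ N by simp only [mem_prod, mem_Iic]; omega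
  by_contra! hj
  rw [hfix j hj] at hinv
  have := w.injective (hfix (w i) (by omega))
  omega

lemma mapsTo_swap_inversions_sdiff {w : Perm ℕ} {a b : ℕ} (hab : a < b) (hw : w b < w a) :
    MapsTo (Prod.map (swap a b) (swap a b)) (inversions (w * swap a b) \ inversions w)
      (inversions w \ inversions (w * swap a b)) := by
  rintro ⟨i, j⟩ ⟨⟨hij, hinv⟩, hnot⟩
  simp only [inversions, mem_ofPred_eq, not_and, not_lt, Perm.mul_apply] at hinv hnot
  refine ⟨⟨?_, hinv⟩, ?_⟩
  · have := hnot hij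
    simp only [Prod.map_fst, Prod.map_snd, swap_apply_def] at hinv ⊢
    split_ifs at hinv ⊢ <;> subst_vars <;> omega
  · simp [inversions, hnot hij]

lemma len_mul_swap_add_ncard_le {w : Perm ℕ} {a b : ℕ} (hfin : (inversions w).Finite)
    (hab : a < b) (hw : w b < w a) {D : Set (ℕ × ℕ)}
    (hD : D ⊆ inversions w \ inversions (w * swap a b))
    (hDswap : ∀ p ∈ D, Prod.map (swap a b) (swap a b) p ∉ inversions (w * swap a b)) :
    len (w * swap a b) + D.ncard ≤ len w := by
  -- `t_ab × t_ab` sends the inversions gained by `w t_ab` injectively to lost ones outside `D`.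
  set S := Prod.map (swap a b) (swap a b)
  set I := inversions w
  set J := inversions (w * swap a b)
  have hS : S.Injective := Prod.map_injective.2 ⟨(swap a b).injective, (swap a b).injective⟩
  have hSS : ∀ q, S (S q) = q := fun q => Prod.ext (swap_apply_self _ _ _) (swap_apply_self _ _ _)
  have hmaps : MapsTo S (J \ I) ((I \ J) \ D) := fun q hq =>
    ⟨mapsTo_swap_inversions_sdiff hab hw hq, fun hqD => hDswap _ hqD (by rw [hSS]; exact hq.1)⟩
  have key : J.encard + D.encard ≤ I.encard := calc
    J.encard + D.encard = (J \ I).encard + D.encard + (J ∩ I).encard := by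
      rw [← encard_sdiff_add_encard_inter J I]; ring
    _ ≤ ((I \ J) \ D).encard + D.encard + (I ∩ J).encard := by
      rw [inter_comm]
      exact add_le_add (add_le_add (encard_le_encard_of_injOn hmaps hS.injOn) le_rfl) le_rfl
    _ = I.encard := by
      rw [encard_sdiff_add_encard_of_subset hD, encard_sdiff_add_encard_inter]
  have hJ : J.Finite := encard_lt_top_iff.1 <| (le_self_add.trans key).trans_lt hfin.encard_lt_top
  have hDf : D.Finite := hfin.subset (hD.trans sdiff_subset)
  rw [← hJ.cast_ncard_eq, ← hDf.cast_ncard_eq, ← hfin.cast_ncard_eq] at key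
  exact_mod_cast key

lemma len_mul_swap_lt {w : Perm ℕ} {a b : ℕ} (hfin : (inversions w).Finite) (hab : a < b)
    (hw : w b < w a) : len (w * swap a b) < len w := by
  have := len_mul_swap_add_ncard_le (D := {(a, b)}) hfin hab hw
    (by simp [inversions, hab, hw, hw.le])
    (by simp [inversions, hab.le])
  rw [ncard_singleton] at this
  omega

lemma len_mul_swap_add_two_le {w : Perm ℕ} {a b c : ℕ} (hfin : (inversions w).Finite)
    (hac : a < c) (hcb : c < b) (hbc : w b < w c) (hca : w c < w a) :
    len (w * swap a b) + 2 ≤ len w := by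
  have hc : swap a b c = c := swap_apply_of_ne_of_ne hac.ne' hcb.ne
  have := len_mul_swap_add_ncard_le (D := {(a, c), (c, b)}) hfin (hac.trans hcb)
    (hbc.trans hca)
    (by simp [inversions, insert_subset_iff, hc, hac, hcb, hbc, hca, hbc.le, hca.le])
    (by simp [inversions, hc, hac.le, hcb.le])
  rwa [ncard_pair (by simp [hac.ne])] at this

lemma lt_of_len_mul_swap_eq_succ {ρ : Perm ℕ} {a b : ℕ} (hfin : (inversions ρ).Finite)
    (hab : a < b) (hlen : len (ρ * swap a b) = len ρ + 1) : ρ a < ρ b := by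
  refine lt_of_le_of_ne (not_lt.1 fun hba => ?_) (ρ.injective.ne hab.ne)
  have := len_mul_swap_lt hfin hab hba
  omega

lemma notMem_Ioo_of_len_mul_swap_eq_succ {ρ : Perm ℕ} {a b c : ℕ}
    (hfin : (inversions (ρ * swap a b)).Finite) (hlen : len (ρ * swap a b) = len ρ + 1)
    (hac : a < c) (hcb : c < b) : ρ c ∉ Ioo (ρ a) (ρ b) := by
  rintro ⟨hac', hcb'⟩
  have hc : swap a b c = c := swap_apply_of_ne_of_ne hac.ne' hcb.ne
  have := len_mul_swap_add_two_le hfin hac hcb (by simpa [hc]) (by simpa [hc])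
  rw [mul_assoc, swap_mul_self, mul_one] at this
  omega

lemma mem_descents_mul_swap {σ : Perm ℕ} {a b p : ℕ} (hab : a < b) (hσ : σ a < σ b)
    (hgap : ∀ c, a < c → c < b → σ c ∉ Ioo (σ a) (σ b)) (hp : p ∈ descents (σ * swap a b)) :
    p ∈ descents σ ∨ p = a ∧ b = a + 1 := by
  obtain ⟨hp0, hdesc⟩ := hp
  have houtside : ∀ c, a < c → c < b → σ c < σ a ∨ σ b < σ c := fun c hac hcb => by
    have := hgap c hac hcb
    have := σ.injective.ne hac.ne'
    have := σ.injective.ne hcb.ne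
    simp only [mem_Ioo, not_and_or, not_lt] at *
    omega
  have := houtside p
  have := houtside (p + 1)
  simp only [Perm.mul_apply, swap_apply_def] at hdesc
  simp only [descents, mem_ofPred_eq]
  split_ifs at hdesc <;> subst_vars <;> omega

lemma kCover.descents_subset {k : ℕ} {ρ π : Perm ℕ} (hρ : (inversions ρ).Finite)
    (hπ : (inversions π).Finite) (h : kCover k ρ π) : descents π ⊆ insert k (descents ρ) := by
  obtain ⟨a, b, -, hak, hkb, rfl, hlen⟩ := h
  have hab : a < b := hak.trans_lt hkb
  intro p hp
  rcases mem_descents_mul_swap hab (lt_of_len_mul_swap_eq_succ hρ hab hlen)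
    (fun c hac hcb => notMem_Ioo_of_len_mul_swap_eq_succ hπ hlen hac hcb) hp with h | ⟨rfl, rfl⟩
  · exact mem_insert_of_mem _ h
  · exact mem_insert_iff.2 (Or.inl (by omega))

lemma descents_nonempty {w : Perm ℕ} (h0 : w 0 = 0) (hw : w ≠ 1) : (descents w).Nonempty := by
  by_contra hempty
  have hmono : StrictMono w := strictMono_nat_of_lt_succ fun i => by
    rcases i.eq_zero_or_pos with rfl | hi
    · rw [h0]
      exact Nat.pos_of_ne_zero fun h1 => one_ne_zero (w.injective (h1.trans h0.symm))
    · exact lt_of_le_of_ne (not_lt.1 fun hlt => hempty ⟨i, hi, hlt⟩) (w.injective.ne (by omega))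
  have := Subsingleton.elim (hmono.orderIsoOfSurjective w w.surjective) (OrderIso.refl ℕ)
  exact hw (Equiv.ext fun i => congrArg (· i) this)

lemma descents_subset_image_of_growth {m n : ℕ} {π : ℕ → ℕ → Perm ℕ} {kk ll : ℕ → ℕ}
    (hfin : ∀ i ≤ m, ∀ j ≤ n, FinPerm (π i j)) (h00 : π 0 0 = 1)
    (hrow : ∀ i, 1 ≤ i → i ≤ m → ∀ j ≤ n, kCover (kk i) (π (i - 1) j) (π i j))
    (hcol : ∀ j, 1 ≤ j → j ≤ n → ∀ i ≤ m, kCover (ll j) (π i (j - 1)) (π i j)) :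
    ∀ i ≤ m, ∀ j ≤ n, descents (π i j) ⊆ kk '' Icc 1 i ∪ ll '' Icc 1 j := by
  have hinv : ∀ i ≤ m, ∀ j ≤ n, (inversions (π i j)).Finite := fun i hi j hj =>
    inversions_finite (hfin i hi j hj).2
  intro i hi j hj
  induction j with
  | zero =>
    induction i with
    | zero => rintro p ⟨-, hp⟩; simp [h00] at hp
    | succ i ih =>
      refine ((hrow (i + 1) (by omega) hi 0 hj).descents_subset (hinv i (by omega) 0 hj)
        (hinv (i + 1) hi 0 hj)).trans (insert_subset ?_ ((ih (by omega)).trans ?_))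
      · exact mem_union_left _ (mem_image_of_mem _ (by simp))
      · gcongr; omega
  | succ j ih =>
    refine ((hcol (j + 1) (by omega) hj i hi).descents_subset (hinv i hi j (by omega))
      (hinv i hi (j + 1) hj)).trans (insert_subset ?_ ((ih (by omega)).trans ?_))
    · exact mem_union_right _ (mem_image_of_mem _ (by simp))
    · gcongr; omega

theorem stmt4_general (m n : ℕ)
    (π : ℕ → ℕ → Equiv.Perm ℕ) (kk ll : ℕ → ℕ)
    (hfin : ∀ i ≤ m, ∀ j ≤ n, FinPerm (π i j))
    (h00 : π 0 0 = 1)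
    (hkmono : ∀ i i', 1 ≤ i → i ≤ i' → i' ≤ m → kk i ≤ kk i')
    (hlanti : ∀ j j', 1 ≤ j → j ≤ j' → j' ≤ n → ll j' ≤ ll j)
    (hlk : ll 1 ≤ kk 1)
    (hrow : ∀ i, 1 ≤ i → i ≤ m → ∀ j ≤ n, kCover (kk i) (π (i - 1) j) (π i j))
    (hcol : ∀ j, 1 ≤ j → j ≤ n → ∀ i ≤ m, kCover (ll j) (π i (j - 1)) (π i j)) :
    (∀ j, 1 ≤ j → j ≤ n → ∀ i ≤ m, π i (j - 1) ≠ 1 → ll j ≤ d1 (π i (j - 1))) ∧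
    (∀ i, 1 ≤ i → i ≤ m → ∀ j ≤ n, π (i - 1) j ≠ 1 → d2 (π (i - 1) j) ≤ kk i) := by
  have hdesc := descents_subset_image_of_growth hfin h00 hrow hcol
  constructor
  · intro j hj hjn i hi hne
    refine le_csInf (descents_nonempty (hfin i hi (j - 1) (by omega)).1 hne) fun p hp => ?_
    rcases hdesc i hi (j - 1) (by omega) hp with
      ⟨i', ⟨hi'pos, hi'le⟩, rfl⟩ | ⟨j', ⟨hj'pos, hj'le⟩, rfl⟩
    · exact (hlanti 1 j le_rfl hj hjn).trans (hlk.trans (hkmono 1 i' le_rfl hi'pos (by omega)))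
    · exact hlanti j' j hj'pos (by omega) hjn
  · intro i hi him j hj hne
    refine csSup_le' fun p hp => ?_
    rcases hdesc (i - 1) (by omega) j hj hp with
      ⟨i', ⟨hi'pos, hi'le⟩, rfl⟩ | ⟨j', ⟨hj'pos, hj'le⟩, rfl⟩
    · exact hkmono i' i hi'pos (by omega) him
    · exact (hlanti 1 j' le_rfl hj'pos (by omega)).trans (hlk.trans (hkmono 1 i le_rfl hi him))

/-- Corollary 4.2: in a growth diagram with weakly increasing `k`'s, weakly
decreasing `l`'s and `l₁ ≤ k₁`, every square satisfies the descent conditions. -/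
theorem stmt4 (m n : ℕ) (hm : 1 ≤ m) (hn : 1 ≤ n)
    (π : ℕ → ℕ → Equiv.Perm ℕ) (kk ll : ℕ → ℕ)
    (hfin : ∀ i ≤ m, ∀ j ≤ n, FinPerm (π i j))
    (h00 : π 0 0 = 1)
    (hkpos : ∀ i, 1 ≤ i → i ≤ m → 0 < kk i)
    (hlpos : ∀ j, 1 ≤ j → j ≤ n → 0 < ll j)
    (hkmono : ∀ i i', 1 ≤ i → i ≤ i' → i' ≤ m → kk i ≤ kk i')
    (hlanti : ∀ j j', 1 ≤ j → j ≤ j' → j' ≤ n → ll j' ≤ ll j)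
    (hlk : ll 1 ≤ kk 1)
    (hrow : ∀ i, 1 ≤ i → i ≤ m → ∀ j ≤ n, kCover (kk i) (π (i - 1) j) (π i j))
    (hcol : ∀ j, 1 ≤ j → j ≤ n → ∀ i ≤ m, kCover (ll j) (π i (j - 1)) (π i j)) :
    (∀ j, 1 ≤ j → j ≤ n → ∀ i ≤ m, π i (j - 1) ≠ 1 → ll j ≤ d1 (π i (j - 1))) ∧
    (∀ i, 1 ≤ i → i ≤ m → ∀ j ≤ n, π (i - 1) j ≠ 1 → d2 (π (i - 1) j) ≤ kk i) :=
  stmt4_general m n π kk ll hfin h00 hkmono hlanti hlk hrow hcol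
end

section
/- For every permutation w ≠ id, we have κ(w) ≥ d₁(w); that is, the largest position i with w⁻¹(w(i)+1) < i satisfies i − 1 ≥ d₁(w). -/
/-- `i(w)`: the largest position `i` with `w⁻¹(w(i)+1) < i`. -/
noncomputable def iw (w : Equiv.Perm ℕ) : ℕ :=
  sSup {i : ℕ | 0 < i ∧ w⁻¹ (w i + 1) < i}

/-- `φ(w) = t_{w(i(w)), w(i(w))+1} ∘ w`, swapping the values `w(i(w))` and `w(i(w))+1`. -/
noncomputable def phi (w : Equiv.Perm ℕ) : Equiv.Perm ℕ :=
  Equiv.swap (w (iw w)) (w (iw w) + 1) * w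

/-- `κ(w) = i(w) - 1`. -/
noncomputable def kappa (w : Equiv.Perm ℕ) : ℕ := iw w - 1

/-! Let `d = d₁(w)`. The value `w (d + 1)` sits at a position `> d` while the larger value `w d`
sits at a position `≤ d`, so going up from `w (d + 1)` to `w d` there is a value `v` at a position
`i > d` whose successor `v + 1` sits at a position `≤ d < i`. Hence `i(w) ≥ i ≥ d + 1`. -/

theorem Nat.exists_between_and_not_succ {P : ℕ → Prop} {a b : ℕ} (hab : a ≤ b) (ha : P a)
    (hb : ¬ P b) : ∃ v, a ≤ v ∧ v < b ∧ P v ∧ ¬ P (v + 1) := by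
  induction b, hab using Nat.le_induction with
  | base => exact absurd ha hb
  | succ b hab ih =>
    by_cases hPb : P b
    · exact ⟨b, hab, b.lt_succ_self, hPb, hb⟩
    · obtain ⟨v, hav, hvb, hv⟩ := ih hPb
      exact ⟨v, hav, hvb.trans b.lt_succ_self, hv⟩

theorem Equiv.Perm.eq_one_of_strictMono {α : Type*} [LinearOrder α] [WellFoundedLT α]
    {w : Equiv.Perm α} (hw : StrictMono w) : w = 1 := by
  ext a
  exact congrArg (· a) (Subsingleton.elim (hw.orderIsoOfSurjective w w.surjective) (.refl α))

theorem descents_nonempty_s13 {w : Equiv.Perm ℕ} (hw0 : w 0 = 0) (hne : w ≠ 1) :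
    (descents w).Nonempty := by
  by_contra hempty
  refine hne (Equiv.Perm.eq_one_of_strictMono (strictMono_nat_of_lt_succ fun n ↦ ?_))
  have hne_succ : w n ≠ w (n + 1) := w.injective.ne n.succ_ne_self.symm
  rcases n.eq_zero_or_pos with rfl | hn
  · rw [hw0] at hne_succ ⊢
    exact Nat.pos_of_ne_zero hne_succ.symm
  · exact lt_of_le_of_ne (not_lt.mp fun h ↦ hempty ⟨n, hn, h⟩) hne_succ

theorem exists_lt_inv_succ_le_of_descent {w : Equiv.Perm ℕ} {d : ℕ} (hd : w (d + 1) < w d) :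
    ∃ i, d < i ∧ w⁻¹ (w i + 1) ≤ d := by
  obtain ⟨v, -, -, hv, hv_succ⟩ := Nat.exists_between_and_not_succ (P := fun v ↦ d < w⁻¹ v)
    hd.le (by simp) (by simp)
  exact ⟨w⁻¹ v, hv, by simpa using hv_succ⟩

theorem bddAbove_iw_set {w : Equiv.Perm ℕ} (hw : {i : ℕ | w i ≠ i}.Finite) :
    BddAbove {i : ℕ | 0 < i ∧ w⁻¹ (w i + 1) < i} := by
  obtain ⟨N, hN⟩ := hw.bddAbove
  refine ⟨N, fun i ⟨_, hi⟩ ↦ not_lt.mp fun hNi ↦ ?_⟩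
  have hfix : ∀ j, N < j → w j = j := fun j hj ↦ not_not.mp fun h ↦ (hj.trans_le' (hN h)).false
  rw [hfix i hNi, Equiv.Perm.inv_eq_iff_eq.mpr (hfix (i + 1) (hNi.trans i.lt_succ_self)).symm]
    at hi
  exact hi.not_gt i.lt_succ_self

theorem stmt13 (w : Equiv.Perm ℕ) (hw : FinPerm w) (hne : w ≠ 1) :
    d1 w ≤ kappa w := by
  obtain ⟨-, hdescent⟩ : d1 w ∈ descents w := Nat.sInf_mem (descents_nonempty_s13 hw.1 hne)
  obtain ⟨i, hdi, hi⟩ := exists_lt_inv_succ_le_of_descent hdescent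
  have hi_le : i ≤ iw w :=
    le_csSup (bddAbove_iw_set hw.2) ⟨by omega, hi.trans_lt hdi⟩
  unfold kappa
  omega
end
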